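/- Let M ∈ ℝ^{m×n} be a rank-r μ-incoherent matrix with largest and smallest nonzero singular values Σmax ≥ Σmin > 0, and let β_T > 0. Suppose X ∈ ℝ^{m×r} and Y ∈ ℝ^{n×r} satisfy d := ‖M − X·Yᵀ‖_F ≤ Σmin/(10r), ‖X‖_F ≤ β_T and ‖Y‖_F ≤ β_T. Then there exist U ∈ ℝ^{m×r} and V ∈ ℝ^{n×r} such that: (i) U·Vᵀ = M; (ii) ‖U‖_F ≤ ‖X‖_F and moreover ‖U‖₂ ≤ ‖X‖₂ in spectral norm; (iii) ‖U − X‖_F ≤ (5/(4Σmin))·max{‖X‖₂, ‖Y‖₂}·d and ‖V − Y‖_F ≤ (2/Σmin)·max{‖X‖₂, ‖Y‖₂}·d; (iv) ‖U^{(i)}‖² ≤ (rμ/m)·β_T² for every row i and ‖V^{(j)}‖² ≤ (3rμ/(2n))·β_T² for every row j. -/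

import Mathlib

open Matrix
open scoped Classical

noncomputable section

/-- Frobenius norm of a real matrix. -/
def frob {m n : ℕ} (A : Matrix (Fin m) (Fin n) ℝ) : ℝ :=
  Real.sqrt (∑ i, ∑ j, A i j ^ 2)

/-- Euclidean norm of the `i`-th row of a matrix. -/
def rowNorm {m n : ℕ} (A : Matrix (Fin m) (Fin n) ℝ) (i : Fin m) : ℝ :=
  Real.sqrt (∑ j, A i j ^ 2)

/-- Frobenius inner product `⟨A,B⟩ = trace(AᵀB)`. -/
def finner {m n : ℕ} (A B : Matrix (Fin m) (Fin n) ℝ) : ℝ :=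
  ∑ i, ∑ j, A i j * B i j

/-- Projection onto the set of entries indexed by `Ω` (other entries are set to `0`). -/
def projOmega {m n : ℕ} (Ω : Finset (Fin m × Fin n)) (A : Matrix (Fin m) (Fin n) ℝ) :
    Matrix (Fin m) (Fin n) ℝ :=
  Matrix.of fun i j => if (i, j) ∈ Ω then A i j else 0

/-- `G₀(z) = (max{0, z-1})²`. -/
def G0 (z : ℝ) : ℝ := max 0 (z - 1) ^ 2

/-- `G₀′(z) = 2·max{0, z-1}`. -/
def G0' (z : ℝ) : ℝ := 2 * max 0 (z - 1)

/-- The matrix whose `i`-th row is the `i`-th row of `A` and whose other rows vanish. -/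
def rowMat {m n : ℕ} (A : Matrix (Fin m) (Fin n) ℝ) (i : Fin m) :
    Matrix (Fin m) (Fin n) ℝ :=
  Matrix.of fun i' j => if i' = i then A i j else 0

/-- The regularizer `G(X,Y)`. -/
def Greg {m n r : ℕ} (ρ β1 β2 βT : ℝ) (X : Matrix (Fin m) (Fin r) ℝ)
    (Y : Matrix (Fin n) (Fin r) ℝ) : ℝ :=
  ρ * ∑ i, G0 (3 * rowNorm X i ^ 2 / (2 * β1 ^ 2)) +
    ρ * ∑ j, G0 (3 * rowNorm Y j ^ 2 / (2 * β2 ^ 2)) +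
    ρ * G0 (3 * frob X ^ 2 / (2 * βT ^ 2)) +
    ρ * G0 (3 * frob Y ^ 2 / (2 * βT ^ 2))

/-- The regularized objective `F̃(X,Y)`. -/
def Ftilde {m n r : ℕ} (Ω : Finset (Fin m × Fin n)) (M : Matrix (Fin m) (Fin n) ℝ)
    (ρ β1 β2 βT : ℝ) (X : Matrix (Fin m) (Fin r) ℝ) (Y : Matrix (Fin n) (Fin r) ℝ) : ℝ :=
  (1 / 2) * frob (projOmega Ω (M - X * Yᵀ)) ^ 2 + Greg ρ β1 β2 βT X Y

/-- Gradient of the regularizer with respect to one of the factors. -/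
def gradG1 {m r : ℕ} (ρ β βT : ℝ) (X : Matrix (Fin m) (Fin r) ℝ) :
    Matrix (Fin m) (Fin r) ℝ :=
  (∑ i, (ρ * G0' (3 * rowNorm X i ^ 2 / (2 * β ^ 2)) * (3 / β ^ 2)) • rowMat X i) +
    (ρ * G0' (3 * frob X ^ 2 / (2 * βT ^ 2)) * (3 / βT ^ 2)) • X

/-- `∇_X F̃(X,Y)`. -/
def gradX {m n r : ℕ} (Ω : Finset (Fin m × Fin n)) (M : Matrix (Fin m) (Fin n) ℝ)
    (ρ β1 βT : ℝ) (X : Matrix (Fin m) (Fin r) ℝ) (Y : Matrix (Fin n) (Fin r) ℝ) :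
    Matrix (Fin m) (Fin r) ℝ :=
  projOmega Ω (X * Yᵀ - M) * Y + gradG1 ρ β1 βT X

/-- `∇_Y F̃(X,Y)`. -/
def gradY {m n r : ℕ} (Ω : Finset (Fin m × Fin n)) (M : Matrix (Fin m) (Fin n) ℝ)
    (ρ β2 βT : ℝ) (X : Matrix (Fin m) (Fin r) ℝ) (Y : Matrix (Fin n) (Fin r) ℝ) :
    Matrix (Fin n) (Fin r) ℝ :=
  (projOmega Ω (X * Yᵀ - M))ᵀ * X + gradG1 ρ β2 βT Y

/-- Membership in `K₁`. -/
def K1mem {m n r : ℕ} (β1 β2 : ℝ) (X : Matrix (Fin m) (Fin r) ℝ)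
    (Y : Matrix (Fin n) (Fin r) ℝ) : Prop :=
  (∀ i, rowNorm X i ≤ β1) ∧ ∀ j, rowNorm Y j ≤ β2

/-- Membership in `K₂`. -/
def K2mem {m n r : ℕ} (βT : ℝ) (X : Matrix (Fin m) (Fin r) ℝ)
    (Y : Matrix (Fin n) (Fin r) ℝ) : Prop :=
  frob X ≤ βT ∧ frob Y ≤ βT

/-- Membership in `K(t) = {(X,Y) : ‖M - XYᵀ‖_F ≤ t}`. -/
def Kmem {m n r : ℕ} (M : Matrix (Fin m) (Fin n) ℝ) (t : ℝ)
    (X : Matrix (Fin m) (Fin r) ℝ) (Y : Matrix (Fin n) (Fin r) ℝ) : Prop :=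
  frob (M - X * Yᵀ) ≤ t

/-- Spectral norm (largest singular value) of a real matrix, as the `ℓ²→ℓ²` operator norm. -/
def specNorm {m n : ℕ} (A : Matrix (Fin m) (Fin n) ℝ) : ℝ :=
  sSup {c : ℝ | ∃ x : Fin n → ℝ, (∑ j, x j ^ 2) ≤ 1 ∧
    c = Real.sqrt (∑ i, (∑ j, A i j * x j) ^ 2)}

/-!
Write `A = Ûᵀ X`, `B = V̂ᵀ Y` and `d = ‖M - X Yᵀ‖_F`. Since `Ûᵀ Û = V̂ᵀ V̂ = 1`,
`A Bᵀ = Σ + E` with `E = Ûᵀ (X Yᵀ - M) V̂` and `‖E‖₂ ≤ d < Σmin`, so `A Bᵀ` is invertible with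
`‖(A Bᵀ)⁻¹‖₂ ≤ (Σmin - d)⁻¹`; hence `A` and `B` are invertible and
`‖A⁻¹‖₂ ≤ ‖Y‖₂ / (Σmin - d)`, `‖B⁻ᵀ‖₂ ≤ ‖X‖₂ / (Σmin - d)`.

Take `U = Û A`, the projection of `X` onto the column space of `M`, and `V = V̂ Σ A⁻ᵀ`, so that
`U Vᵀ = M`. As `Yᵀ (V̂ B⁻ᵀ) = 1` and `(1 - ÛÛᵀ) M = 0`, the residual
`X - U = (1 - ÛÛᵀ) X` equals `(1 - ÛÛᵀ)(X Yᵀ - M) V̂ B⁻ᵀ`, which gives the bound on `‖U - X‖_F`.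
For `V` we use `Σ A⁻ᵀ = B - Eᵀ A⁻ᵀ`: `V - Y` splits into `V̂ B - Y = -(1 - V̂V̂ᵀ) Y`, bounded by
the same argument with the roles of the factors exchanged, and the orthogonal piece
`-V̂ Eᵀ A⁻ᵀ`. The row bounds follow from incoherence, because the rows of `U` and `V` are the rows
of `Û` and `V̂` multiplied by `A` and `Σ A⁻ᵀ`, of spectral norms at most `‖X‖₂` and `(10/9)‖Y‖₂`.
-/

open scoped Matrix.Norms.L2Operator

section L2
variable {ι κ : Type*} [Fintype ι] [Fintype κ] [DecidableEq κ]

lemma norm_toLp (x : ι → ℝ) : ‖WithLp.toLp 2 x‖ = Real.sqrt (∑ i, x i ^ 2) := by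
  simp [EuclideanSpace.norm_eq]

lemma norm_mulVec_le (A : Matrix ι κ ℝ) (x : κ → ℝ) :
    ‖WithLp.toLp 2 (A *ᵥ x)‖ ≤ ‖A‖ * ‖WithLp.toLp 2 x‖ :=
  A.l2_opNorm_mulVec (WithLp.toLp 2 x)

lemma l2_opNorm_le_of_forall {A : Matrix ι κ ℝ} {c : ℝ} (hc : 0 ≤ c)
    (h : ∀ x, ‖WithLp.toLp 2 (A *ᵥ x)‖ ≤ c * ‖WithLp.toLp 2 x‖) : ‖A‖ ≤ c := by
  rw [l2_opNorm_def]
  exact ContinuousLinearMap.opNorm_le_bound _ hc fun x => h x.ofLp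

lemma l2_opNorm_transpose [DecidableEq ι] (A : Matrix ι κ ℝ) : ‖Aᵀ‖ = ‖A‖ := by
  rw [← conjTranspose_eq_transpose_of_trivial, l2_opNorm_conjTranspose]

lemma l2_opNorm_le_one_of_transpose_mul_self {W : Matrix ι κ ℝ} (hW : Wᵀ * W = 1) :
    ‖W‖ ≤ 1 := by
  have h1 : ‖(1 : Matrix κ κ ℝ)‖ ≤ 1 := by
    rw [← diagonal_one, l2_opNorm_diagonal]
    exact pi_norm_le_iff_of_nonneg zero_le_one |>.mpr fun _ => by simp
  have h := l2_opNorm_conjTranspose_mul_self W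
  rw [conjTranspose_eq_transpose_of_trivial, hW] at h
  nlinarith [norm_nonneg W]

lemma l2_opNorm_isometry_mul_le {W : Matrix ι κ ℝ} (hW : Wᵀ * W = 1) {p : Type*} [Fintype p]
    [DecidableEq p] (G : Matrix κ p ℝ) : ‖W * G‖ ≤ ‖G‖ :=
  (l2_opNorm_mul W G).trans (mul_le_of_le_one_left (norm_nonneg G)
    (l2_opNorm_le_one_of_transpose_mul_self hW))

lemma l2_opNorm_transpose_mul_le [DecidableEq ι] {W : Matrix ι κ ℝ} (hW : Wᵀ * W = 1)
    {p : Type*} [Fintype p] [DecidableEq p] (G : Matrix ι p ℝ) : ‖Wᵀ * G‖ ≤ ‖G‖ :=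
  (l2_opNorm_mul Wᵀ G).trans (mul_le_of_le_one_left (norm_nonneg G)
    ((l2_opNorm_transpose W).le.trans (l2_opNorm_le_one_of_transpose_mul_self hW)))

lemma l2_opNorm_inv_le_of_isUnit_mul [DecidableEq ι] {A B : Matrix ι ι ℝ}
    (h : IsUnit (A * B).det) :
    ‖A⁻¹‖ ≤ ‖B‖ * ‖(A * B)⁻¹‖ ∧ ‖B⁻¹‖ ≤ ‖(A * B)⁻¹‖ * ‖A‖ := by
  have hA : A⁻¹ = B * (A * B)⁻¹ :=
    inv_eq_right_inv (by rw [← Matrix.mul_assoc, mul_nonsing_inv _ h])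
  have hB : B⁻¹ = (A * B)⁻¹ * A :=
    inv_eq_left_inv (by rw [Matrix.mul_assoc, nonsing_inv_mul _ h])
  exact ⟨hA ▸ l2_opNorm_mul _ _, hB ▸ l2_opNorm_mul _ _⟩

lemma isUnit_and_l2_opNorm_inv_le [DecidableEq ι] {F : Matrix ι ι ℝ} {c : ℝ} (hc : 0 < c)
    (h : ∀ x, c * ‖WithLp.toLp 2 x‖ ≤ ‖WithLp.toLp 2 (F *ᵥ x)‖) :
    IsUnit F ∧ ‖F⁻¹‖ ≤ c⁻¹ := by
  have hF : IsUnit F := by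
    refine mulVec_injective_iff_isUnit.mp fun x y hxy => ?_
    have hxy' := h (x - y)
    rw [mulVec_sub, hxy, sub_self, WithLp.toLp_zero, norm_zero] at hxy'
    have : ‖WithLp.toLp 2 (x - y)‖ = 0 :=
      le_antisymm (nonpos_of_mul_nonpos_right hxy' hc) (norm_nonneg _)
    simpa [sub_eq_zero] using this
  refine ⟨hF, l2_opNorm_le_of_forall (inv_nonneg.mpr hc.le) fun y => ?_⟩
  have hy := h (F⁻¹ *ᵥ y)
  rw [mulVec_mulVec, mul_nonsing_inv _ ((isUnit_iff_isUnit_det F).mp hF), one_mulVec] at hy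
  rwa [inv_mul_eq_div, le_div_iff₀' hc]

lemma mul_norm_le_norm_diagonal_mulVec [DecidableEq ι] {σ : ι → ℝ} {s : ℝ} (hs : 0 ≤ s)
    (hσ : ∀ k, s ≤ σ k) (x : ι → ℝ) :
    s * ‖WithLp.toLp 2 x‖ ≤ ‖WithLp.toLp 2 (diagonal σ *ᵥ x)‖ := by
  refine le_of_pow_le_pow_left₀ two_ne_zero (norm_nonneg _) ?_
  rw [mul_pow, norm_toLp, norm_toLp, Real.sq_sqrt (by positivity), Real.sq_sqrt (by positivity),
    Finset.mul_sum]
  gcongr with k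
  rw [mulVec_diagonal, mul_pow]
  gcongr
  exact hσ k

lemma isUnit_diagonal_add_and_l2_opNorm_inv_le [DecidableEq ι] {σ : ι → ℝ} {E : Matrix ι ι ℝ}
    {s d : ℝ} (hσ : ∀ k, s ≤ σ k) (hE : ‖E‖ ≤ d) (hds : d < s) :
    IsUnit (diagonal σ + E) ∧ ‖(diagonal σ + E)⁻¹‖ ≤ (s - d)⁻¹ := by
  have hs : 0 ≤ s := (norm_nonneg E).trans (hE.trans hds.le)
  refine isUnit_and_l2_opNorm_inv_le (sub_pos.mpr hds) fun x => ?_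
  have hD := mul_norm_le_norm_diagonal_mulVec hs hσ x
  have hEx := (norm_mulVec_le E x).trans (mul_le_mul_of_nonneg_right hE (norm_nonneg _))
  have htri := norm_sub_le (WithLp.toLp 2 ((diagonal σ + E) *ᵥ x)) (WithLp.toLp 2 (E *ᵥ x))
  rw [← WithLp.toLp_sub, add_mulVec, add_sub_cancel_right] at htri
  rw [add_mulVec]
  linarith

end L2

theorem specNorm_eq_l2_opNorm {m n : ℕ} (A : Matrix (Fin m) (Fin n) ℝ) : specNorm A = ‖A‖ := by
  rw [l2_opNorm_def, ← ContinuousLinearMap.sSup_unitClosedBall_eq_norm, specNorm,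
    ← (WithLp.toLp_surjective 2).image_preimage (Metric.closedBall 0 1), Set.image_image]
  congr 1
  ext c
  simp [norm_toLp, Real.sqrt_le_one, eq_comm (a := c), mulVec, dotProduct]

section Frobenius
variable {m n p : ℕ}

lemma rowNorm_eq_norm (A : Matrix (Fin m) (Fin n) ℝ) (i : Fin m) :
    rowNorm A i = ‖WithLp.toLp 2 (A i)‖ := by
  rw [rowNorm, norm_toLp]

lemma frob_nonneg (A : Matrix (Fin m) (Fin n) ℝ) : 0 ≤ frob A := Real.sqrt_nonneg _

lemma frob_sq (A : Matrix (Fin m) (Fin n) ℝ) : frob A ^ 2 = ∑ i, ∑ j, A i j ^ 2 :=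
  Real.sq_sqrt (by positivity)

lemma frob_sq_eq_sum_rowNorm_sq (A : Matrix (Fin m) (Fin n) ℝ) :
    frob A ^ 2 = ∑ i, rowNorm A i ^ 2 := by
  simp only [frob_sq, rowNorm, Real.sq_sqrt (by positivity : (0 : ℝ) ≤ ∑ j, A _ j ^ 2)]

lemma frob_sq_eq_trace (A : Matrix (Fin m) (Fin n) ℝ) : frob A ^ 2 = trace (Aᵀ * A) := by
  rw [frob_sq, trace, Finset.sum_comm]
  simp [mul_apply, sq]

lemma frob_transpose (A : Matrix (Fin m) (Fin n) ℝ) : frob Aᵀ = frob A := by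
  rw [frob, frob, Finset.sum_comm]
  rfl

lemma frob_neg (A : Matrix (Fin m) (Fin n) ℝ) : frob (-A) = frob A := by
  simp [frob]

lemma frob_sub_comm (A B : Matrix (Fin m) (Fin n) ℝ) : frob (A - B) = frob (B - A) := by
  rw [← neg_sub, frob_neg]

lemma rowNorm_mul_le (A : Matrix (Fin m) (Fin n) ℝ) (B : Matrix (Fin n) (Fin p) ℝ) (i : Fin m) :
    rowNorm (A * B) i ≤ rowNorm A i * ‖B‖ := by
  have hrow : (A * B) i = Bᵀ *ᵥ A i := by
    ext k
    simp [mul_apply, mulVec, dotProduct, mul_comm]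
  rw [rowNorm_eq_norm, rowNorm_eq_norm, hrow, mul_comm, ← l2_opNorm_transpose B]
  exact norm_mulVec_le _ _

lemma rowNorm_mul_sq_le {A : Matrix (Fin m) (Fin n) ℝ} {B : Matrix (Fin n) (Fin p) ℝ} {i : Fin m}
    {c β : ℝ} (hA : ∑ k, A i k ^ 2 ≤ c) (hB : ‖B‖ ≤ β) : rowNorm (A * B) i ^ 2 ≤ c * β ^ 2 := by
  have hc : 0 ≤ c := (Finset.sum_nonneg fun _ _ => sq_nonneg _).trans hA
  calc rowNorm (A * B) i ^ 2 ≤ (rowNorm A i * ‖B‖) ^ 2 :=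
        pow_le_pow_left₀ (Real.sqrt_nonneg _) (rowNorm_mul_le A B i) 2
    _ = (∑ k, A i k ^ 2) * ‖B‖ ^ 2 := by rw [mul_pow, rowNorm, Real.sq_sqrt (by positivity)]
    _ ≤ c * β ^ 2 := by gcongr

lemma frob_mul_le_frob_mul (A : Matrix (Fin m) (Fin n) ℝ) (B : Matrix (Fin n) (Fin p) ℝ) :
    frob (A * B) ≤ frob A * ‖B‖ := by
  refine le_of_pow_le_pow_left₀ two_ne_zero (mul_nonneg (frob_nonneg A) (norm_nonneg B)) ?_
  rw [frob_sq_eq_sum_rowNorm_sq, mul_pow, frob_sq_eq_sum_rowNorm_sq, Finset.sum_mul]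
  gcongr with i
  rw [← mul_pow]
  exact pow_le_pow_left₀ (Real.sqrt_nonneg _) (rowNorm_mul_le A B i) 2

lemma frob_mul_le_mul_frob (A : Matrix (Fin m) (Fin n) ℝ) (B : Matrix (Fin n) (Fin p) ℝ) :
    frob (A * B) ≤ ‖A‖ * frob B := by
  rw [← frob_transpose, transpose_mul, ← frob_transpose B, ← l2_opNorm_transpose A, mul_comm]
  exact frob_mul_le_frob_mul _ _

lemma l2_opNorm_le_frob (A : Matrix (Fin m) (Fin n) ℝ) : ‖A‖ ≤ frob A := by
  refine l2_opNorm_le_of_forall (frob_nonneg A) fun x => ?_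
  refine le_of_pow_le_pow_left₀ two_ne_zero (mul_nonneg (frob_nonneg A) (norm_nonneg _)) ?_
  rw [mul_pow, frob_sq, norm_toLp, norm_toLp, Real.sq_sqrt (by positivity),
    Real.sq_sqrt (by positivity), Finset.sum_mul]
  gcongr with i
  exact Finset.sum_mul_sq_le_sq_mul_sq Finset.univ (A i) x

end Frobenius

section Isometry
variable {m n p q r : ℕ} {W : Matrix (Fin m) (Fin r) ℝ}

lemma frob_isometry_mul (hW : Wᵀ * W = 1) (G : Matrix (Fin r) (Fin n) ℝ) :
    frob (W * G) = frob G := by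
  refine (pow_left_inj₀ (frob_nonneg _) (frob_nonneg _) two_ne_zero).mp ?_
  rw [frob_sq_eq_trace, frob_sq_eq_trace, transpose_mul, Matrix.mul_assoc,
    ← Matrix.mul_assoc Wᵀ, hW, Matrix.one_mul]

lemma frob_transpose_mul_le (hW : Wᵀ * W = 1) (Z : Matrix (Fin m) (Fin n) ℝ) :
    frob (Wᵀ * Z) ≤ frob Z :=
  (frob_mul_le_mul_frob _ _).trans <| mul_le_of_le_one_left (frob_nonneg Z) <|
    (l2_opNorm_transpose W).le.trans (l2_opNorm_le_one_of_transpose_mul_self hW)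

lemma frob_transpose_mul_mul_le {V : Matrix (Fin n) (Fin q) ℝ} (hW : Wᵀ * W = 1)
    (hV : Vᵀ * V = 1) (Z : Matrix (Fin m) (Fin n) ℝ) : frob (Wᵀ * Z * V) ≤ frob Z := by
  rw [Matrix.mul_assoc]
  refine (frob_transpose_mul_le hW _).trans ?_
  rw [← frob_transpose, transpose_mul, ← frob_transpose Z]
  exact frob_transpose_mul_le hV _

lemma frob_add_isometry_mul_sq (hW : Wᵀ * W = 1) {P : Matrix (Fin m) (Fin n) ℝ}
    (hP : Wᵀ * P = 0) (G : Matrix (Fin r) (Fin n) ℝ) :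
    frob (P + W * G) ^ 2 = frob P ^ 2 + frob G ^ 2 := by
  have hP' : Pᵀ * W = 0 := by
    rw [← transpose_transpose (Pᵀ * W), transpose_mul, transpose_transpose, hP, transpose_zero]
  rw [← frob_isometry_mul hW G, frob_sq_eq_trace, frob_sq_eq_trace, frob_sq_eq_trace,
    transpose_add, Matrix.add_mul, Matrix.mul_add, Matrix.mul_add, transpose_mul,
    Matrix.mul_assoc, ← Matrix.mul_assoc Pᵀ, hP', hP]
  simp

lemma frob_sub_proj_le (hW : Wᵀ * W = 1) (Z : Matrix (Fin m) (Fin n) ℝ) :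
    frob (Z - W * (Wᵀ * Z)) ≤ frob Z := by
  have hP : Wᵀ * (Z - W * (Wᵀ * Z)) = 0 := by
    rw [Matrix.mul_sub, ← Matrix.mul_assoc, hW, Matrix.one_mul, sub_self]
  have h := frob_add_isometry_mul_sq hW hP (Wᵀ * Z)
  rw [sub_add_cancel] at h
  exact le_of_pow_le_pow_left₀ two_ne_zero (frob_nonneg Z)
    (by nlinarith [sq_nonneg (frob (Wᵀ * Z))])

lemma frob_sub_proj_le_of_transpose_mul_eq_one (hW : Wᵀ * W = 1) (K : Matrix (Fin r) (Fin n) ℝ)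
    {X : Matrix (Fin m) (Fin p) ℝ} {Y G : Matrix (Fin n) (Fin p) ℝ} (hG : Yᵀ * G = 1) :
    frob (X - W * (Wᵀ * X)) ≤ frob (W * K - X * Yᵀ) * ‖G‖ := by
  set Z := X * Yᵀ - W * K
  have hX : X - W * (Wᵀ * X) = (Z - W * (Wᵀ * Z)) * G := by
    have hXG : X * Yᵀ * G = X := by rw [Matrix.mul_assoc, hG, Matrix.mul_one]
    have hWK : Wᵀ * (W * K) = K := by rw [← Matrix.mul_assoc, hW, Matrix.one_mul]
    simp only [Z, Matrix.sub_mul, Matrix.mul_sub, hWK, hXG, Matrix.mul_assoc]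
    abel
  calc frob (X - W * (Wᵀ * X)) ≤ frob (Z - W * (Wᵀ * Z)) * ‖G‖ :=
        hX ▸ frob_mul_le_frob_mul _ _
    _ ≤ frob Z * ‖G‖ := by gcongr; exact frob_sub_proj_le hW Z
    _ = frob (W * K - X * Yᵀ) * ‖G‖ := by rw [frob_sub_comm]

end Isometry

lemma mul_div_sub_le_of_le_div_ten {a s d : ℝ} (ha : 0 ≤ a) (hs : 0 < s) (hd0 : 0 ≤ d)
    (hd : d ≤ s / 10) : d * (a / (s - d)) ≤ 10 / 9 * (a / s) * d := by
  have hsd : 9 / 10 * s ≤ s - d := by linarith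
  calc d * (a / (s - d)) ≤ d * (a / (9 / 10 * s)) := by gcongr
    _ = 10 / 9 * (a / s) * d := by field_simp

section Balancing
variable {m n r : ℕ} {Uh : Matrix (Fin m) (Fin r) ℝ} {Vh : Matrix (Fin n) (Fin r) ℝ}
  {S E : Matrix (Fin r) (Fin r) ℝ} {X : Matrix (Fin m) (Fin r) ℝ} {Y : Matrix (Fin n) (Fin r) ℝ}
  {d : ℝ}

lemma transpose_mul_mul_transpose_eq (hU : Uhᵀ * Uh = 1) (hV : Vhᵀ * Vh = 1) :
    (Uhᵀ * X) * (Vhᵀ * Y)ᵀ = S + Uhᵀ * (X * Yᵀ - Uh * S * Vhᵀ) * Vh := by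
  rw [transpose_mul, transpose_transpose, Matrix.mul_sub, Matrix.sub_mul]
  simp only [Matrix.mul_assoc]
  rw [hV, Matrix.mul_one, ← Matrix.mul_assoc Uhᵀ Uh, hU, Matrix.one_mul]
  abel

lemma mul_transpose_mul_inv_transpose_eq {A : Matrix (Fin r) (Fin r) ℝ} (hA : IsUnit A.det)
    (hS : Sᵀ = S) : Uh * A * (Vh * (S * A⁻¹ᵀ))ᵀ = Uh * S * Vhᵀ := by
  rw [transpose_mul, transpose_mul, transpose_transpose, hS, Matrix.mul_assoc Uh,
    ← Matrix.mul_assoc A, ← Matrix.mul_assoc A, mul_nonsing_inv _ hA, Matrix.one_mul,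
    Matrix.mul_assoc]

lemma mul_inv_transpose_eq_sub {A B : Matrix (Fin r) (Fin r) ℝ} (hS : Sᵀ = S)
    (hA : IsUnit A.det) (hF : A * Bᵀ = S + E) : S * A⁻¹ᵀ = B - Eᵀ * A⁻¹ᵀ := by
  have h : A⁻¹ * S = Bᵀ - A⁻¹ * E := by
    rw [eq_sub_iff_add_eq, ← Matrix.mul_add, ← hF, ← Matrix.mul_assoc, nonsing_inv_mul _ hA,
      Matrix.one_mul]
  rw [← hS, ← transpose_mul, h, transpose_sub, transpose_transpose, transpose_mul]

lemma frob_left_factor_sub_le (hU : Uhᵀ * Uh = 1) (hV : Vhᵀ * Vh = 1)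
    (hB : IsUnit (Vhᵀ * Y)ᵀ.det) (hd : frob (Uh * S * Vhᵀ - X * Yᵀ) ≤ d) :
    frob (Uh * (Uhᵀ * X) - X) ≤ d * ‖(Vhᵀ * Y)ᵀ⁻¹‖ := by
  have hG : Yᵀ * (Vh * (Vhᵀ * Y)ᵀ⁻¹) = 1 := by
    rw [← Matrix.mul_assoc, ← transpose_transpose Vh, ← transpose_mul, transpose_transpose,
      mul_nonsing_inv _ hB]
  rw [frob_sub_comm]
  refine (frob_sub_proj_le_of_transpose_mul_eq_one hU (S * Vhᵀ) hG).trans ?_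
  rw [← Matrix.mul_assoc]
  exact mul_le_mul hd (l2_opNorm_isometry_mul_le hV _) (norm_nonneg _)
    ((frob_nonneg _).trans hd)

lemma frob_right_factor_sub_sq_le (hU : Uhᵀ * Uh = 1) (hV : Vhᵀ * Vh = 1) (hS : Sᵀ = S)
    (hA : IsUnit (Uhᵀ * X).det) (hF : (Uhᵀ * X) * (Vhᵀ * Y)ᵀ = S + E) (hE : frob E ≤ d)
    (hd : frob (Uh * S * Vhᵀ - X * Yᵀ) ≤ d) :
    frob (Vh * (S * (Uhᵀ * X)⁻¹ᵀ) - Y) ^ 2 ≤ 2 * (d * ‖(Uhᵀ * X)⁻¹‖) ^ 2 := by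
  set A := Uhᵀ * X
  have hP : Vhᵀ * (Vh * (Vhᵀ * Y) - Y) = 0 := by
    rw [Matrix.mul_sub, ← Matrix.mul_assoc, hV, Matrix.one_mul, sub_self]
  have hG : Xᵀ * (Uh * A⁻¹ᵀ) = 1 := by
    have hXU : Xᵀ * Uh = Aᵀ := by rw [transpose_mul, transpose_transpose]
    rw [← Matrix.mul_assoc, hXU, ← transpose_mul, nonsing_inv_mul _ hA, transpose_one]
  have hres : frob (Vh * (Vhᵀ * Y) - Y) ≤ d * ‖A⁻¹‖ := by
    rw [frob_sub_comm]
    refine (frob_sub_proj_le_of_transpose_mul_eq_one hV (S * Uhᵀ) hG).trans ?_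
    have hMt : Vh * (S * Uhᵀ) - Y * Xᵀ = (Uh * S * Vhᵀ - X * Yᵀ)ᵀ := by
      rw [transpose_sub, transpose_mul, transpose_mul, transpose_mul, hS, transpose_transpose,
        transpose_transpose]
    rw [hMt, frob_transpose, ← l2_opNorm_transpose A⁻¹]
    exact mul_le_mul hd (l2_opNorm_isometry_mul_le hU _) (norm_nonneg _)
      ((frob_nonneg _).trans hd)
  have horth : frob (-(Eᵀ * A⁻¹ᵀ)) ≤ d * ‖A⁻¹‖ := by
    rw [frob_neg, ← transpose_mul, frob_transpose, mul_comm]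
    exact (frob_mul_le_mul_frob _ _).trans (mul_le_mul_of_nonneg_left hE (norm_nonneg _))
  have hsplit : Vh * (S * A⁻¹ᵀ) - Y = (Vh * (Vhᵀ * Y) - Y) + Vh * -(Eᵀ * A⁻¹ᵀ) := by
    rw [mul_inv_transpose_eq_sub hS hA hF, Matrix.mul_sub, Matrix.mul_neg]
    abel
  rw [hsplit, frob_add_isometry_mul_sq hV hP, two_mul]
  gcongr <;> exact frob_nonneg _

theorem exists_factorization_near {σ : Fin r → ℝ} {s : ℝ} (hU : Uhᵀ * Uh = 1)
    (hV : Vhᵀ * Vh = 1) (hσ : ∀ k, s ≤ σ k) (hd : frob (Uh * diagonal σ * Vhᵀ - X * Yᵀ) ≤ d)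
    (hds : d < s) :
    ∃ G : Matrix (Fin r) (Fin r) ℝ,
      Uh * (Uhᵀ * X) * (Vh * G)ᵀ = Uh * diagonal σ * Vhᵀ ∧
      frob (Uh * (Uhᵀ * X) - X) ≤ d * (‖X‖ / (s - d)) ∧
      frob (Vh * G - Y) ^ 2 ≤ 2 * (d * (‖Y‖ / (s - d))) ^ 2 ∧
      ‖G‖ ≤ ‖Y‖ + d * (‖Y‖ / (s - d)) := by
  set A := Uhᵀ * X
  set B := Vhᵀ * Y
  set E := Uhᵀ * (X * Yᵀ - Uh * diagonal σ * Vhᵀ) * Vh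
  have hF : A * Bᵀ = diagonal σ + E := transpose_mul_mul_transpose_eq hU hV
  have hE : frob E ≤ d := (frob_transpose_mul_mul_le hU hV _).trans (frob_sub_comm _ _ ▸ hd)
  obtain ⟨hFunit, hFinv⟩ :=
    isUnit_diagonal_add_and_l2_opNorm_inv_le hσ ((l2_opNorm_le_frob E).trans hE) hds
  rw [← hF, isUnit_iff_isUnit_det] at hFunit
  rw [← hF] at hFinv
  have hA : IsUnit A.det := isUnit_of_mul_isUnit_left (det_mul A Bᵀ ▸ hFunit)
  have hB : IsUnit Bᵀ.det := isUnit_of_mul_isUnit_right (det_mul A Bᵀ ▸ hFunit)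
  obtain ⟨hAinv, hBinv⟩ := l2_opNorm_inv_le_of_isUnit_mul hFunit
  have hd0 : 0 ≤ d := (frob_nonneg _).trans hd
  have hAinv' : ‖A⁻¹‖ ≤ ‖Y‖ / (s - d) := by
    rw [div_eq_mul_inv]
    refine hAinv.trans (mul_le_mul ?_ hFinv (norm_nonneg _) (norm_nonneg Y))
    rw [l2_opNorm_transpose]
    exact l2_opNorm_transpose_mul_le hV Y
  have hBinv' : ‖Bᵀ⁻¹‖ ≤ ‖X‖ / (s - d) := by
    rw [div_eq_inv_mul]
    exact hBinv.trans (mul_le_mul hFinv (l2_opNorm_transpose_mul_le hU X) (norm_nonneg _)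
      (inv_nonneg.mpr (sub_pos.mpr hds).le))
  have hS : (diagonal σ)ᵀ = diagonal σ := diagonal_transpose σ
  refine ⟨diagonal σ * A⁻¹ᵀ, mul_transpose_mul_inv_transpose_eq hA hS, ?_, ?_, ?_⟩
  · exact (frob_left_factor_sub_le hU hV hB hd).trans (by gcongr)
  · exact (frob_right_factor_sub_sq_le hU hV hS hA hF hE hd).trans (by gcongr)
  · rw [mul_inv_transpose_eq_sub hS hA hF]
    refine (norm_sub_le _ _).trans (add_le_add (l2_opNorm_transpose_mul_le hV Y) ?_)
    refine (l2_opNorm_mul _ _).trans ?_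
    rw [l2_opNorm_transpose, l2_opNorm_transpose]
    exact mul_le_mul ((l2_opNorm_le_frob E).trans hE) hAinv' (norm_nonneg _) hd0

theorem exists_factorization_of_le_div_ten {σ : Fin r → ℝ} {s : ℝ} (hU : Uhᵀ * Uh = 1)
    (hV : Vhᵀ * Vh = 1) (hs : 0 < s) (hσ : ∀ k, s ≤ σ k)
    (hd : frob (Uh * diagonal σ * Vhᵀ - X * Yᵀ) ≤ s / 10) :
    ∃ G : Matrix (Fin r) (Fin r) ℝ,
      Uh * (Uhᵀ * X) * (Vh * G)ᵀ = Uh * diagonal σ * Vhᵀ ∧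
      frob (Uh * (Uhᵀ * X) - X) ≤
        5 / (4 * s) * max ‖X‖ ‖Y‖ * frob (Uh * diagonal σ * Vhᵀ - X * Yᵀ) ∧
      frob (Vh * G - Y) ≤ 2 / s * max ‖X‖ ‖Y‖ * frob (Uh * diagonal σ * Vhᵀ - X * Yᵀ) ∧
      ‖G‖ ≤ 10 / 9 * ‖Y‖ := by
  obtain ⟨G, hUV, hUX, hVY, hG⟩ := exists_factorization_near hU hV hσ le_rfl (by linarith)
  have hd0 := frob_nonneg (Uh * diagonal σ * Vhᵀ - X * Yᵀ)
  generalize frob (Uh * diagonal σ * Vhᵀ - X * Yᵀ) = d at *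
  have hXd := mul_div_sub_le_of_le_div_ten (norm_nonneg X) hs hd0 hd
  have hYd := mul_div_sub_le_of_le_div_ten (norm_nonneg Y) hs hd0 hd
  refine ⟨G, hUV, ?_, ?_, ?_⟩
  · calc frob (Uh * (Uhᵀ * X) - X) ≤ 10 / 9 * (‖X‖ / s) * d := hUX.trans hXd
      _ ≤ 5 / 4 * (max ‖X‖ ‖Y‖ / s) * d := by
        gcongr ?_ * (?_ / _) * _
        · norm_num
        · exact le_max_left _ _
      _ = 5 / (4 * s) * max ‖X‖ ‖Y‖ * d := by ring
  · refine le_of_pow_le_pow_left₀ two_ne_zero (by positivity) (hVY.trans ?_)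
    have hYmax : d * (‖Y‖ / (s - d)) ≤ 10 / 9 * (max ‖X‖ ‖Y‖ / s * d) := by
      refine hYd.trans ?_
      rw [mul_assoc]
      gcongr
      exact le_max_right _ _
    calc 2 * (d * (‖Y‖ / (s - d))) ^ 2 ≤ 2 * (10 / 9 * (max ‖X‖ ‖Y‖ / s * d)) ^ 2 := by
          gcongr
          exact mul_nonneg hd0 (div_nonneg (norm_nonneg Y) (by linarith))
      _ ≤ (2 / s * max ‖X‖ ‖Y‖ * d) ^ 2 := by
          rw [show 2 / s * max ‖X‖ ‖Y‖ * d = 2 * (max ‖X‖ ‖Y‖ / s * d) by ring]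
          nlinarith [sq_nonneg (max ‖X‖ ‖Y‖ / s * d)]
  · calc ‖G‖ ≤ ‖Y‖ + 10 / 9 * (‖Y‖ / s) * (s / 10) :=
          hG.trans (add_le_add le_rfl (hYd.trans (by gcongr)))
      _ = 10 / 9 * ‖Y‖ := by field_simp; ring

end Balancing

theorem stmt4_general (m n r : ℕ) (hr : 1 ≤ r)
    (μ βT Smin : ℝ)
    (M : Matrix (Fin m) (Fin n) ℝ)
    (Uh : Matrix (Fin m) (Fin r) ℝ) (Vh : Matrix (Fin n) (Fin r) ℝ)
    (σ : Fin r → ℝ)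
    (hUorth : Uhᵀ * Uh = 1) (hVorth : Vhᵀ * Vh = 1)
    (hσpos : ∀ k, 0 < σ k)
    (hM : M = Uh * Matrix.diagonal σ * Vhᵀ)
    (hSmin : (∀ k, Smin ≤ σ k) ∧ ∃ k, σ k = Smin)
    (hincU : ∀ i, ∑ k, Uh i k ^ 2 ≤ μ * r / m)
    (hincV : ∀ j, ∑ k, Vh j k ^ 2 ≤ μ * r / n)
    (X : Matrix (Fin m) (Fin r) ℝ) (Y : Matrix (Fin n) (Fin r) ℝ)
    (hd : frob (M - X * Yᵀ) ≤ Smin / (10 * r))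
    (hX : frob X ≤ βT) (hY : frob Y ≤ βT) :
    ∃ (U : Matrix (Fin m) (Fin r) ℝ) (V : Matrix (Fin n) (Fin r) ℝ),
      U * Vᵀ = M ∧
      frob U ≤ frob X ∧
      specNorm U ≤ specNorm X ∧
      frob (U - X) ≤ 5 / (4 * Smin) * max (specNorm X) (specNorm Y) * frob (M - X * Yᵀ) ∧
      frob (V - Y) ≤ 2 / Smin * max (specNorm X) (specNorm Y) * frob (M - X * Yᵀ) ∧
      (∀ i, rowNorm U i ^ 2 ≤ r * μ / m * βT ^ 2) ∧
      (∀ j, rowNorm V j ^ 2 ≤ 3 * r * μ / (2 * n) * βT ^ 2) := by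
  have hSmin_pos : 0 < Smin := by
    obtain ⟨k, hk⟩ := hSmin.2
    exact hk ▸ hσpos k
  have hd10 : frob (M - X * Yᵀ) ≤ Smin / 10 := hd.trans <|
    div_le_div_of_nonneg_left hSmin_pos.le (by norm_num) (by norm_num; exact_mod_cast hr)
  subst hM
  obtain ⟨G, hUV, hUX, hVY, hG⟩ :=
    exists_factorization_of_le_div_ten hUorth hVorth hSmin_pos hSmin.1 hd10
  have hAX : ‖Uhᵀ * X‖ ≤ ‖X‖ := l2_opNorm_transpose_mul_le hUorth X
  simp only [specNorm_eq_l2_opNorm]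
  refine ⟨Uh * (Uhᵀ * X), Vh * G, hUV, ?_, (l2_opNorm_isometry_mul_le hUorth _).trans hAX,
    hUX, hVY, fun i => ?_, fun j => ?_⟩
  · rw [frob_isometry_mul hUorth]
    exact frob_transpose_mul_le hUorth X
  · rw [show (r : ℝ) * μ / m = μ * r / m by ring]
    exact rowNorm_mul_sq_le (hincU i) (hAX.trans ((l2_opNorm_le_frob X).trans hX))
  · have hGβ : ‖G‖ ≤ 10 / 9 * βT := hG.trans (by gcongr; exact (l2_opNorm_le_frob Y).trans hY)
    refine (rowNorm_mul_sq_le (hincV j) hGβ).trans ?_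
    rw [show 3 * r * μ / (2 * n) * βT ^ 2 = μ * r / n * (3 / 2 * βT ^ 2) by ring, mul_pow]
    refine mul_le_mul_of_nonneg_left ?_
      ((Finset.sum_nonneg fun _ _ => sq_nonneg _).trans (hincV j))
    gcongr ?_ * _
    norm_num

/-- **Proposition 1, refined form.** -/
theorem stmt4 (m n r : ℕ) (hm : 1 ≤ m) (hn : 1 ≤ n) (hr : 1 ≤ r)
    (μ βT Smax Smin : ℝ) (hβT : 0 < βT)
    (M : Matrix (Fin m) (Fin n) ℝ)
    (Uh : Matrix (Fin m) (Fin r) ℝ) (Vh : Matrix (Fin n) (Fin r) ℝ)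
    (σ : Fin r → ℝ)
    (hUorth : Uhᵀ * Uh = 1) (hVorth : Vhᵀ * Vh = 1)
    (hσpos : ∀ k, 0 < σ k)
    (hσmono : ∀ k l : Fin r, k ≤ l → σ l ≤ σ k)
    (hM : M = Uh * Matrix.diagonal σ * Vhᵀ)
    (hSmax : (∀ k, σ k ≤ Smax) ∧ ∃ k, σ k = Smax)
    (hSmin : (∀ k, Smin ≤ σ k) ∧ ∃ k, σ k = Smin)
    (hincU : ∀ i, ∑ k, Uh i k ^ 2 ≤ μ * r / m)
    (hincV : ∀ j, ∑ k, Vh j k ^ 2 ≤ μ * r / n)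
    (X : Matrix (Fin m) (Fin r) ℝ) (Y : Matrix (Fin n) (Fin r) ℝ)
    (hd : frob (M - X * Yᵀ) ≤ Smin / (10 * r))
    (hX : frob X ≤ βT) (hY : frob Y ≤ βT) :
    ∃ (U : Matrix (Fin m) (Fin r) ℝ) (V : Matrix (Fin n) (Fin r) ℝ),
      U * Vᵀ = M ∧
      frob U ≤ frob X ∧
      specNorm U ≤ specNorm X ∧
      frob (U - X) ≤ 5 / (4 * Smin) * max (specNorm X) (specNorm Y) * frob (M - X * Yᵀ) ∧
      frob (V - Y) ≤ 2 / Smin * max (specNorm X) (specNorm Y) * frob (M - X * Yᵀ) ∧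
      (∀ i, rowNorm U i ^ 2 ≤ r * μ / m * βT ^ 2) ∧
      (∀ j, rowNorm V j ^ 2 ≤ 3 * r * μ / (2 * n) * βT ^ 2) :=
  stmt4_general m n r hr μ βT Smin M Uh Vh σ hUorth hVorth hσpos hM hSmin hincU hincV X Y hd hX hY
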